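/- Let F be a field, let c, r ∈ F with c ≠ 0, set b = c·r, and let W be the Tate normal form E(b,c): y² + (1−c)xy − by = x³ − bx². If the discriminant Δ of W is nonzero, then for P = (0,0) one has 4•P = (r(r−1), r²(c − r + 1)). -/

import Mathlib

/-!
Since `Δ = b³ (16b² + b(1 - 20c - 8c²) + c(c - 1)³)`, the hypothesis `Δ ≠ 0` gives `b = cr ≠ 0`,
so neither `P` nor `2P` is `2`-torsion and `4P` is obtained by doubling twice along tangents:
the tangent at `P = (0, 0)` is horizontal, giving `2P = (b, bc)`, and the tangent at `2P` has
slope `c + r - 1`, giving `4P = (r(r - 1), r²(c - r + 1))`.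
-/

namespace WeierstrassCurve.Affine

variable {F : Type*} [Field F]

namespace Point

lemma add_self_of_Y_ne_of_eq [DecidableEq F] {W : Affine F} {x y ℓ x' y' : F}
    {h : W.Nonsingular x y} {h' : W.Nonsingular x' y'} (hy : y ≠ W.negY x y)
    (hℓ : W.slope x x y y = ℓ) (hx' : W.addX x x ℓ = x') (hy' : W.addY x x y ℓ = y') :
    some _ _ h + some _ _ h = some _ _ h' := by
  subst hℓ hx' hy'
  exact add_self_of_Y_ne hy

end Point

open Point

def tateNormalForm (b c : F) : Affine F :=
  { a₁ := 1 - c, a₂ := -b, a₃ := -b, a₄ := 0, a₆ := 0 }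

lemma tateNormalForm_Δ (b c : F) : (tateNormalForm b c).Δ =
    b ^ 3 * (16 * b ^ 2 + b * (1 - 20 * c - 8 * c ^ 2) + c * (c - 1) ^ 3) := by
  simp only [tateNormalForm, Δ, b₂, b₄, b₆, b₈]
  ring

lemma ne_zero_of_tateNormalForm_Δ_ne_zero {b c : F} (hΔ : (tateNormalForm b c).Δ ≠ 0) :
    b ≠ 0 := by
  rintro rfl
  simp [tateNormalForm_Δ] at hΔ

lemma tateNormalForm_equation_zero_zero (b c : F) : (tateNormalForm b c).Equation 0 0 := by
  simp [equation_iff, tateNormalForm]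

lemma tateNormalForm_equation_b_mul (b c : F) : (tateNormalForm b c).Equation b (b * c) := by
  rw [equation_iff]
  simp only [tateNormalForm]
  ring

lemma tateNormalForm_equation_four (c r : F) :
    (tateNormalForm (c * r) c).Equation (r * (r - 1)) (r ^ 2 * (c - r + 1)) := by
  rw [equation_iff]
  simp only [tateNormalForm]
  ring

section Doubling

variable [DecidableEq F]

lemma tateNormalForm_add_self_zero_zero {b c : F} (hb : b ≠ 0)
    (h₀ : (tateNormalForm b c).Nonsingular 0 0)
    (h₂ : (tateNormalForm b c).Nonsingular b (b * c)) :
    some _ _ h₀ + some _ _ h₀ = some _ _ h₂ := by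
  have hy : (0 : F) ≠ (tateNormalForm b c).negY 0 0 := by
    simpa [negY, tateNormalForm] using hb.symm
  refine add_self_of_Y_ne_of_eq hy (slope_of_Y_ne rfl hy) ?_ ?_ <;>
    simp only [addX, addY, negAddY, negY, tateNormalForm] <;> field_simp <;> ring

lemma tateNormalForm_add_self_b_mul {c r : F} (hcr : c * r ≠ 0)
    (h₂ : (tateNormalForm (c * r) c).Nonsingular (c * r) (c * r * c))
    (h₄ : (tateNormalForm (c * r) c).Nonsingular (r * (r - 1)) (r ^ 2 * (c - r + 1))) :
    some _ _ h₂ + some _ _ h₂ = some _ _ h₄ := by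
  have hc : c ≠ 0 := left_ne_zero_of_mul hcr
  have hneg : (tateNormalForm (c * r) c).negY (c * r) (c * r * c) = 0 := by
    simp only [negY, tateNormalForm]
    ring
  have hy : c * r * c ≠ (tateNormalForm (c * r) c).negY (c * r) (c * r * c) := by
    rw [hneg]
    exact mul_ne_zero hcr hc
  have hℓ : (tateNormalForm (c * r) c).slope (c * r) (c * r) (c * r * c) (c * r * c) =
      c + r - 1 := by
    rw [slope_of_Y_ne rfl hy, hneg, sub_zero, div_eq_iff (mul_ne_zero hcr hc)]
    simp only [tateNormalForm]
    ring
  refine add_self_of_Y_ne_of_eq hy hℓ ?_ ?_ <;>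
    simp only [addX, addY, negAddY, negY, tateNormalForm] <;> ring

end Doubling

end WeierstrassCurve.Affine

open WeierstrassCurve.Affine

open Classical in
theorem tate_normal_form_four_smul_general (F : Type*) [Field F] (c r : F)
    (b : F) (hb : b = c * r)
    (W : WeierstrassCurve.Affine F)
    (hW : W = { a₁ := 1 - c, a₂ := -b, a₃ := -b, a₄ := 0, a₆ := 0 })
    (hΔ : W.Δ ≠ 0) :
    ∃ (h : W.Nonsingular 0 0) (h4 : W.Nonsingular (r * (r - 1)) (r ^ 2 * (c - r + 1))),
      (4 : ℤ) • (WeierstrassCurve.Affine.Point.some _ _ h) =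
        WeierstrassCurve.Affine.Point.some _ _ h4 := by
  subst hb
  obtain rfl : W = tateNormalForm (c * r) c := hW
  have hcr : c * r ≠ 0 := ne_zero_of_tateNormalForm_Δ_ne_zero hΔ
  have nonsingular {x y : F} := (equation_iff_nonsingular_of_Δ_ne_zero (x := x) (y := y) hΔ).mp
  have h₀ := nonsingular (tateNormalForm_equation_zero_zero (c * r) c)
  have h₂ := nonsingular (tateNormalForm_equation_b_mul (c * r) c)
  have h₄ := nonsingular (tateNormalForm_equation_four c r)
  refine ⟨h₀, h₄, ?_⟩
  rw [show (4 : ℤ) = 2 + 2 from rfl, add_smul, two_zsmul,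
    tateNormalForm_add_self_zero_zero hcr h₀ h₂, tateNormalForm_add_self_b_mul hcr h₂ h₄]

open Classical in
/-- For a field `F`, `c, r ∈ F` with `c ≠ 0`, set `b = c * r`, and let `W` be
the Tate normal form `E(b,c) : y² + (1-c)xy - by = x³ - bx²`. If the discriminant `Δ` of `W` is
nonzero, then for `P = (0,0)` one has `4 • P = (r(r-1), r²(c - r + 1))`. -/
theorem tate_normal_form_four_smul (F : Type*) [Field F] (c r : F) (hc : c ≠ 0)
    (b : F) (hb : b = c * r)
    (W : WeierstrassCurve.Affine F)
    (hW : W = { a₁ := 1 - c, a₂ := -b, a₃ := -b, a₄ := 0, a₆ := 0 })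
    (hΔ : W.Δ ≠ 0) :
    ∃ (h : W.Nonsingular 0 0) (h4 : W.Nonsingular (r * (r - 1)) (r ^ 2 * (c - r + 1))),
      (4 : ℤ) • (WeierstrassCurve.Affine.Point.some _ _ h) =
        WeierstrassCurve.Affine.Point.some _ _ h4 :=
  tate_normal_form_four_smul_general F c r b hb W hW hΔ
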